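/- Let X₁, ..., X_M be i.i.d. Poisson(μ) random variables with μ = 2^{−αt/3}λ/2, and let B be the event that X₁ ≥ 1 or X_i ≥ 2 for some i ≥ 2. Then P(B) ≤ E[binom(X+1,2)] · 2^{−αt/3} = (λ²/8 + λ/2) 2^{−αt/3}, where X ~ Po(λ/2) counts old edges; moreover E[Σ X_i | B] ≤ λ/2 + 2. -/

import Mathlib

open scoped Classical

/-- The Poisson probability mass function with mean `m`. -/
noncomputable def ppmf (m : ℝ) (n : ℕ) : ℝ := Real.exp (-m) * m ^ n / n.factorial

namespace Stmt14Aux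

open ENNReal

lemma ppmf_nonneg {m : ℝ} (hm : 0 ≤ m) (n : ℕ) : 0 ≤ ppmf m n := by
  unfold ppmf
  positivity

noncomputable def p (m : ℝ) (n : ℕ) : ℝ≥0∞ := ENNReal.ofReal (ppmf m n)

lemma hasSum_ppmf {m : ℝ} (hm : 0 ≤ m) : HasSum (ppmf m) 1 := by
  have h := ProbabilityTheory.poissonPMFRealSum m.toNNReal
  have heq : (fun n => ProbabilityTheory.poissonPMFReal m.toNNReal n) = ppmf m := by
    funext n
    unfold ProbabilityTheory.poissonPMFReal ppmf
    rw [Real.coe_toNNReal _ hm]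
  rw [← heq]; exact h

lemma tsum_p {m : ℝ} (hm : 0 ≤ m) : ∑' n, p m n = 1 := by
  rw [show (1 : ℝ≥0∞) = ENNReal.ofReal (1:ℝ) by simp, ← (hasSum_ppmf hm).tsum_eq]
  exact (ENNReal.ofReal_tsum_of_nonneg (ppmf_nonneg hm) (hasSum_ppmf hm).summable).symm

lemma ppmf_shift (m : ℝ) (n : ℕ) : ((n:ℝ) + 1) * ppmf m (n+1) = m * ppmf m n := by
  unfold ppmf
  rw [Nat.factorial_succ, pow_succ]
  push_cast
  have h1 : (n.factorial : ℝ) ≠ 0 := Nat.cast_ne_zero.mpr n.factorial_ne_zero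
  have h2 : ((n:ℝ) + 1) ≠ 0 := by positivity
  field_simp

lemma p_shift {m : ℝ} (hm : 0 ≤ m) (n : ℕ) :
    ((n:ℝ≥0∞) + 1) * p m (n+1) = ENNReal.ofReal m * p m n := by
  have hc : ((n:ℝ≥0∞) + 1) = ENNReal.ofReal ((n:ℝ) + 1) := by
    rw [ENNReal.ofReal_add (Nat.cast_nonneg n) zero_le_one]
    simp
  rw [hc, p, p, ← ENNReal.ofReal_mul (by positivity), ← ENNReal.ofReal_mul hm, ppmf_shift]

lemma tsum_np {m : ℝ} (hm : 0 ≤ m) : ∑' n : ℕ, (n : ℝ≥0∞) * p m n = ENNReal.ofReal m := by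
  rw [tsum_eq_zero_add' ENNReal.summable]
  have h : ∀ n : ℕ, ((n+1 : ℕ) : ℝ≥0∞) * p m (n+1) = ENNReal.ofReal m * p m n := by
    intro n
    rw [← p_shift hm n]
    push_cast
    ring
  simp only [Nat.cast_zero, zero_mul, zero_add]
  calc ∑' n : ℕ, ((n+1:ℕ) : ℝ≥0∞) * p m (n+1) = ∑' n, ENNReal.ofReal m * p m n :=
        tsum_congr h
    _ = ENNReal.ofReal m * ∑' n, p m n := ENNReal.tsum_mul_left
    _ = ENNReal.ofReal m := by rw [tsum_p hm, mul_one]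

/-- instance-free indicator -/
noncomputable def ind (c : Prop) : ℝ≥0∞ := if c then 1 else 0

lemma ind_pos {c : Prop} (h : c) : ind c = 1 := if_pos h
lemma ind_neg {c : Prop} (h : ¬ c) : ind c = 0 := if_neg h
lemma ind_le_one (c : Prop) : ind c ≤ 1 := by
  by_cases h : c
  · rw [ind_pos h]
  · rw [ind_neg h]; exact zero_le_one

lemma ind_mul_le (c : Prop) (a : ℝ≥0∞) : ind c * a ≤ a := by
  calc ind c * a ≤ 1 * a := mul_le_mul_left (ind_le_one c) a
    _ = a := one_mul a

noncomputable def Qc (m : ℝ) (c : ℕ → Prop) : ℝ≥0∞ := ∑' n, ind (c n) * p m n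

noncomputable def SNc (m : ℝ) (c : ℕ → Prop) : ℝ≥0∞ :=
  ∑' n : ℕ, ind (c n) * ((n:ℝ≥0∞) * p m n)

lemma tsum_shift {f : ℕ → ℝ≥0∞} (h0 : f 0 = 0) : ∑' n, f n = ∑' n, f (n+1) := by
  rw [tsum_eq_zero_add' ENNReal.summable, h0, zero_add]

lemma le_Qc {m : ℝ} {c : ℕ → Prop} {n : ℕ} (hc : c n) : p m n ≤ Qc m c := by
  unfold Qc
  refine le_trans ?_ (ENNReal.le_tsum n)
  rw [ind_pos hc, one_mul]

lemma Qc_le_one {m : ℝ} (hm : 0 ≤ m) (c : ℕ → Prop) : Qc m c ≤ 1 := by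
  rw [← tsum_p hm]
  exact ENNReal.tsum_le_tsum fun n => ind_mul_le _ _

lemma Qc_true (m : ℝ) (hm : 0 ≤ m) : Qc m (fun _ => True) = 1 := by
  rw [← tsum_p hm]
  exact tsum_congr fun n => by rw [ind_pos trivial, one_mul]

lemma SNc_true {m : ℝ} (hm : 0 ≤ m) :
    SNc m (fun _ => True) ≤ ENNReal.ofReal m * Qc m (fun _ => True) := by
  have h1 : SNc m (fun _ => True) = ENNReal.ofReal m := by
    rw [← tsum_np hm]
    exact tsum_congr fun n => by rw [ind_pos trivial, one_mul]
  rw [h1, Qc_true m hm, mul_one]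

lemma Qc_ge2_rep {m : ℝ} (hm : 0 ≤ m) :
    Qc m (fun n => 2 ≤ n) = ∑' n : ℕ, p m (n+2) := by
  unfold Qc
  rw [tsum_shift (by simp [ind_neg]),
    tsum_shift (f := fun n => ind (2 ≤ n + 1) * p m (n+1)) (by simp [ind_neg])]
  exact tsum_congr fun n => by rw [ind_pos (by omega), one_mul]

lemma Qc_ge1_rep {m : ℝ} (hm : 0 ≤ m) :
    Qc m (fun n => 1 ≤ n) = p m 1 + ∑' n : ℕ, p m (n+2) := by
  unfold Qc
  rw [tsum_shift (by simp [ind_neg])]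
  rw [tsum_eq_zero_add' ENNReal.summable]
  congr 1
  · rw [ind_pos (by omega), one_mul]
  · exact tsum_congr fun n => by rw [ind_pos (by omega), one_mul]

lemma Qc_ge1_le {m : ℝ} (hm : 0 ≤ m) : Qc m (fun n => 1 ≤ n) ≤ ENNReal.ofReal m := by
  rw [← tsum_np hm]
  refine ENNReal.tsum_le_tsum fun n => ?_
  by_cases h : 1 ≤ n
  · rw [ind_pos h, one_mul]
    calc p m n = 1 * p m n := (one_mul _).symm
    _ ≤ (n : ℝ≥0∞) * p m n := by
        gcongr
        exact_mod_cast Nat.one_le_cast.mpr h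
  · rw [ind_neg h, zero_mul]
    exact zero_le

lemma ppmf_two_step {m : ℝ} (hm : 0 ≤ m) (n : ℕ) :
    ppmf m (n+2) ≤ m^2/2 * ppmf m n := by
  unfold ppmf
  have key : (2:ℝ) * n.factorial ≤ ((n+2).factorial:ℝ) := by
    have h : 2 * n.factorial ≤ (n+2).factorial := by
      rw [Nat.factorial_succ, Nat.factorial_succ]
      exact Nat.mul_le_mul (by omega) (Nat.le_mul_of_pos_left _ (by omega))
    exact_mod_cast h
  have h1 : (0:ℝ) < n.factorial := by exact_mod_cast n.factorial_pos
  have h2 : (0:ℝ) < ((n+2).factorial:ℝ) := by exact_mod_cast (n+2).factorial_pos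
  rw [div_mul_div_comm, div_le_div_iff₀ h2 (by positivity)]
  calc Real.exp (-m) * m ^ (n + 2) * (2 * (n.factorial:ℝ))
      = (Real.exp (-m) * m ^ n * m^2) * (2 * (n.factorial:ℝ)) := by ring
    _ ≤ (Real.exp (-m) * m ^ n * m^2) * ((n+2).factorial:ℝ) :=
        mul_le_mul_of_nonneg_left key (by positivity)
    _ = m ^ 2 * (Real.exp (-m) * m ^ n) * ((n+2).factorial:ℝ) := by ring

lemma Qc_ge2_le {m : ℝ} (hm : 0 ≤ m) : Qc m (fun n => 2 ≤ n) ≤ ENNReal.ofReal (m^2/2) := by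
  rw [Qc_ge2_rep hm]
  calc ∑' n : ℕ, p m (n+2) ≤ ∑' n : ℕ, ENNReal.ofReal (m^2/2) * p m n := by
        refine ENNReal.tsum_le_tsum fun n => ?_
        rw [p, p, ← ENNReal.ofReal_mul (by positivity)]
        exact ENNReal.ofReal_le_ofReal (ppmf_two_step hm n)
    _ = ENNReal.ofReal (m^2/2) := by rw [ENNReal.tsum_mul_left, tsum_p hm, mul_one]

lemma SNc_le1 {m : ℝ} (hm : 0 ≤ m) :
    SNc m (fun n => n ≤ 1) ≤ ENNReal.ofReal m * Qc m (fun n => n ≤ 1) := by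
  have h1 : SNc m (fun n => n ≤ 1) = p m 1 := by
    unfold SNc
    rw [tsum_shift (by simp), tsum_eq_zero_add' ENNReal.summable]
    have hz : (∑' n : ℕ, ind (n + 1 + 1 ≤ 1) * (((n+1+1:ℕ):ℝ≥0∞) * p m (n+1+1))) = 0 := by
      refine ENNReal.tsum_eq_zero.mpr fun n => ?_
      rw [ind_neg (by omega), zero_mul]
    rw [hz, add_zero, ind_pos (by omega), one_mul]
    push_cast
    rw [one_mul]
  have h2 : p m 1 = ENNReal.ofReal m * p m 0 := by
    have := p_shift hm 0
    simpa using this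
  rw [h1, h2]
  exact mul_le_mul_right (le_Qc (by norm_num)) _

lemma SNc_ge2 {m : ℝ} (hm : 0 ≤ m) :
    SNc m (fun n => 2 ≤ n) ≤ (ENNReal.ofReal m + 2) * Qc m (fun n => 2 ≤ n) := by
  have hshift : ∀ n : ℕ, ind (2 ≤ n + 1) * (((n+1:ℕ):ℝ≥0∞) * p m (n+1))
      = ind (1 ≤ n) * (ENNReal.ofReal m * p m n) := by
    intro n
    by_cases h1 : 1 ≤ n
    · rw [ind_pos (by omega), ind_pos h1, one_mul, one_mul, ← p_shift hm n]
      push_cast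
      ring
    · rw [ind_neg (by omega), ind_neg h1, zero_mul, zero_mul]
  have hrep : SNc m (fun n => 2 ≤ n)
      = ENNReal.ofReal m * p m 1 + ENNReal.ofReal m * ∑' n : ℕ, p m (n+2) := by
    unfold SNc
    rw [tsum_shift (by simp [ind_neg])]
    calc ∑' n : ℕ, ind (2 ≤ n + 1) * (((n+1:ℕ):ℝ≥0∞) * p m (n+1))
        = ∑' n : ℕ, ind (1 ≤ n) * (ENNReal.ofReal m * p m n) := tsum_congr hshift
      _ = ∑' n : ℕ, ENNReal.ofReal m * (ind (1 ≤ n) * p m n) := by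
          refine tsum_congr fun n => ?_
          ring
      _ = ENNReal.ofReal m * Qc m (fun n => 1 ≤ n) := ENNReal.tsum_mul_left
      _ = ENNReal.ofReal m * (p m 1 + ∑' n : ℕ, p m (n+2)) := by rw [Qc_ge1_rep hm]
      _ = ENNReal.ofReal m * p m 1 + ENNReal.ofReal m * ∑' n : ℕ, p m (n+2) := mul_add _ _ _
  have h21 : ENNReal.ofReal m * p m 1 = 2 * p m 2 := by
    have := p_shift hm 1
    rw [← this]
    norm_num
  have hp2 : p m 2 ≤ Qc m (fun n => 2 ≤ n) := le_Qc (by norm_num)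
  have hrep2 : ENNReal.ofReal m * ∑' n : ℕ, p m (n+2)
      = ENNReal.ofReal m * Qc m (fun n => 2 ≤ n) := by rw [Qc_ge2_rep hm]
  rw [hrep, h21, hrep2, add_mul]
  calc 2 * p m 2 + ENNReal.ofReal m * Qc m (fun n => 2 ≤ n)
      ≤ 2 * Qc m (fun n => 2 ≤ n) + ENNReal.ofReal m * Qc m (fun n => 2 ≤ n) :=
        add_le_add_left (mul_le_mul_right hp2 2) _
    _ = ENNReal.ofReal m * Qc m (fun n => 2 ≤ n) + 2 * Qc m (fun n => 2 ≤ n) := add_comm _ _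

lemma SNc_ge1 {m : ℝ} (hm : 0 ≤ m) :
    SNc m (fun n => 1 ≤ n) ≤ (ENNReal.ofReal m + 2) * Qc m (fun n => 1 ≤ n) := by
  have h0 : SNc m (fun n => 1 ≤ n) = ENNReal.ofReal m := by
    rw [← tsum_np hm]
    refine tsum_congr fun n => ?_
    by_cases h : 1 ≤ n
    · rw [ind_pos h, one_mul]
    · have hn : n = 0 := by omega
      rw [ind_neg h, zero_mul, hn]
      simp
  have hsplit : ENNReal.ofReal m
      ≤ p m 1 + ENNReal.ofReal m * Qc m (fun n => 1 ≤ n) := by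
    conv_lhs => rw [← mul_one (ENNReal.ofReal m), ← tsum_p hm, ← ENNReal.tsum_mul_left]
    rw [tsum_eq_zero_add' ENNReal.summable]
    have e0 : ENNReal.ofReal m * p m 0 = p m 1 := by
      have := p_shift hm 0
      simpa using this.symm
    rw [e0]
    gcongr
    calc ∑' n : ℕ, ENNReal.ofReal m * p m (n+1)
        = ENNReal.ofReal m * ∑' n : ℕ, p m (n+1) := ENNReal.tsum_mul_left
      _ ≤ ENNReal.ofReal m * Qc m (fun n => 1 ≤ n) := by
          refine mul_le_mul_right ?_ _
          have hle := ENNReal.tsum_comp_le_tsum_of_injective Nat.succ_injective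
            (fun n => ind (1 ≤ n) * p m n)
          calc ∑' n : ℕ, p m (n+1)
              = ∑' n : ℕ, ind (1 ≤ n + 1) * p m (n+1) := by
                refine tsum_congr fun n => ?_
                rw [ind_pos (by omega), one_mul]
            _ ≤ Qc m (fun n => 1 ≤ n) := hle
  have hp1 : p m 1 ≤ Qc m (fun n => 1 ≤ n) := le_Qc (by norm_num)
  rw [h0, add_mul]
  calc ENNReal.ofReal m ≤ p m 1 + ENNReal.ofReal m * Qc m (fun n => 1 ≤ n) := hsplit
    _ ≤ 2 * Qc m (fun n => 1 ≤ n) + ENNReal.ofReal m * Qc m (fun n => 1 ≤ n) := by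
        refine add_le_add_left ?_ _
        calc p m 1 ≤ Qc m (fun n => 1 ≤ n) := hp1
          _ = 1 * Qc m (fun n => 1 ≤ n) := (one_mul _).symm
          _ ≤ 2 * Qc m (fun n => 1 ≤ n) := mul_le_mul_left (by norm_num) _
    _ = ENNReal.ofReal m * Qc m (fun n => 1 ≤ n) + 2 * Qc m (fun n => 1 ≤ n) := add_comm _ _

lemma tsum_pi_prod : ∀ (M : ℕ) (f : Fin M → ℕ → ℝ≥0∞),
    ∑' x : Fin M → ℕ, ∏ i, f i (x i) = ∏ i, ∑' n, f i n := by
  intro M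
  induction M with
  | zero =>
    intro f
    rw [tsum_eq_single (fun _ => 0) (fun b hb => absurd (funext fun i => i.elim0) hb)]
    simp
  | succ M ih =>
    intro f
    have he := ((Fin.consEquiv (fun _ : Fin (M+1) => ℕ)).tsum_eq
      (fun x : Fin (M+1) → ℕ => ∏ i, f i (x i))).symm
    rw [he]
    have h2 : ∀ (q : ℕ × (Fin M → ℕ)),
        (∏ i, f i ((Fin.consEquiv (fun _ : Fin (M+1) => ℕ)) q i))
        = f 0 q.1 * ∏ i : Fin M, f i.succ (q.2 i) := by
      intro q
      rw [Fin.prod_univ_succ]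
      congr 1
    calc ∑' q : ℕ × (Fin M → ℕ), ∏ i, f i ((Fin.consEquiv (fun _ : Fin (M+1) => ℕ)) q i)
        = ∑' q : ℕ × (Fin M → ℕ), f 0 q.1 * ∏ i : Fin M, f i.succ (q.2 i) := tsum_congr h2
      _ = ∑' (a : ℕ) (x : Fin M → ℕ), f 0 a * ∏ i : Fin M, f i.succ (x i) := ENNReal.tsum_prod'
      _ = ∑' a : ℕ, f 0 a * ∏ i : Fin M, ∑' n, f i.succ n := by
          refine tsum_congr fun a => ?_
          rw [ENNReal.tsum_mul_left, ih]
      _ = (∑' n, f 0 n) * ∏ i : Fin M, ∑' n, f i.succ n := ENNReal.tsum_mul_right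
      _ = ∏ i : Fin (M+1), ∑' n, f i n :=
          (Fin.prod_univ_succ (fun i : Fin (M+1) => ∑' n, f i n)).symm

lemma oftsum {ι : Type*} (f : ι → ℝ) (hf : ∀ x, 0 ≤ f x)
    (h : ∑' x, ENNReal.ofReal (f x) ≠ ⊤) :
    ENNReal.ofReal (∑' x, f x) = ∑' x, ENNReal.ofReal (f x) := by
  have hs : Summable f := by
    have h2 := ENNReal.summable_toReal h
    refine h2.congr fun x => ?_
    exact ENNReal.toReal_ofReal (hf x)
  exact ENNReal.ofReal_tsum_of_nonneg hf hs

lemma final_le {ι : Type*} (f : ι → ℝ) (hf : ∀ x, 0 ≤ f x) {c : ℝ} (hc : 0 ≤ c)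
    (h : ∑' x, ENNReal.ofReal (f x) ≤ ENNReal.ofReal c) : ∑' x, f x ≤ c := by
  have hne : ∑' x, ENNReal.ofReal (f x) ≠ ⊤ :=
    ne_top_of_le_ne_top ENNReal.ofReal_ne_top h
  rw [← ENNReal.ofReal_le_ofReal_iff hc, oftsum f hf hne]
  exact h

/-! ### The combinatorial partition of the event `B` -/

def CC {M : ℕ} (hM : 0 < M) (i j : Fin M) (n : ℕ) : Prop :=
  if j = i then (if i = ⟨0, hM⟩ then 1 ≤ n else 2 ≤ n)
  else (if i < j then n ≤ 1 else True)

def BP {M : ℕ} (hM : 0 < M) (i : Fin M) (x : Fin M → ℕ) : Prop := ∀ j, CC hM i j (x j)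

lemma CC_self_z {M : ℕ} (hM : 0 < M) {i : Fin M} (h : i = ⟨0, hM⟩) :
    CC hM i i = fun n => 1 ≤ n := by
  funext n
  unfold CC
  rw [if_pos rfl, if_pos h]

lemma CC_self_nz {M : ℕ} (hM : 0 < M) {i : Fin M} (h : i ≠ ⟨0, hM⟩) :
    CC hM i i = fun n => 2 ≤ n := by
  funext n
  unfold CC
  rw [if_pos rfl, if_neg h]

lemma CC_lt {M : ℕ} (hM : 0 < M) {i j : Fin M} (h : i < j) :
    CC hM i j = fun n => n ≤ 1 := by
  funext n
  unfold CC
  rw [if_neg (ne_of_gt h), if_pos h]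

lemma CC_other {M : ℕ} (hM : 0 < M) {i j : Fin M} (h1 : j ≠ i) (h2 : ¬ i < j) :
    CC hM i j = fun _ => True := by
  funext n
  unfold CC
  rw [if_neg h1, if_neg h2]

lemma ne_z_of_lt {M : ℕ} (hM : 0 < M) {i j : Fin M} (h : i < j) : j ≠ ⟨0, hM⟩ := by
  intro hz
  rw [Fin.lt_def, hz] at h
  have hv : (⟨0, hM⟩ : Fin M).val = 0 := rfl
  omega

lemma BP_lt_absurd {M : ℕ} (hM : 0 < M) {x : Fin M → ℕ} {i i' : Fin M}
    (h : i < i') (hb : BP hM i x) (hb' : BP hM i' x) : False := by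
  have h1 : x i' ≤ 1 := by
    have := hb i'
    rwa [CC_lt hM h] at this
  have h2 : 2 ≤ x i' := by
    have := hb' i'
    rwa [CC_self_nz hM (ne_z_of_lt hM h)] at this
  omega

lemma BP_unique {M : ℕ} (hM : 0 < M) {x : Fin M → ℕ} {i i' : Fin M}
    (hb : BP hM i x) (hb' : BP hM i' x) : i = i' := by
  rcases lt_trichotomy i i' with h|h|h
  · exact (BP_lt_absurd hM h hb hb').elim
  · exact h
  · exact (BP_lt_absurd hM h hb' hb).elim

lemma BP_exists {M : ℕ} (hM : 0 < M) {x : Fin M → ℕ}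
    (h : 1 ≤ x ⟨0, hM⟩ ∨ ∃ i : Fin M, i ≠ ⟨0, hM⟩ ∧ 2 ≤ x i) : ∃ i, BP hM i x := by
  set S := Finset.univ.filter (fun j : Fin M => j ≠ ⟨0, hM⟩ ∧ 2 ≤ x j) with hS
  by_cases hne : S.Nonempty
  · refine ⟨S.max' hne, fun j => ?_⟩
    have hmem := Finset.mem_filter.mp (S.max'_mem hne)
    by_cases hj : j = S.max' hne
    · subst hj
      rw [CC_self_nz hM hmem.2.1]
      exact hmem.2.2
    · by_cases hlt : S.max' hne < j
      · rw [CC_lt hM hlt]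
        show x j ≤ 1
        by_contra hxj
        push_neg at hxj
        have hjz : j ≠ ⟨0, hM⟩ := ne_z_of_lt hM hlt
        have hjS : j ∈ S := Finset.mem_filter.mpr ⟨Finset.mem_univ j, hjz, by omega⟩
        exact absurd (S.le_max' j hjS) (not_le.mpr hlt)
      · rw [CC_other hM hj hlt]
        trivial
  · have hnot : ∀ j : Fin M, j ≠ ⟨0, hM⟩ → x j ≤ 1 := by
      intro j hj
      by_contra hxj
      push_neg at hxj
      exact hne ⟨j, Finset.mem_filter.mpr ⟨Finset.mem_univ j, hj, by omega⟩⟩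
    have h0 : 1 ≤ x ⟨0, hM⟩ := by
      rcases h with h|⟨i, hi, h2⟩
      · exact h
      · exact absurd (hnot i hi) (by omega)
    refine ⟨⟨0, hM⟩, fun j => ?_⟩
    by_cases hj : j = ⟨0, hM⟩
    · subst hj
      rw [CC_self_z hM rfl]
      exact h0
    · by_cases hlt : (⟨0, hM⟩ : Fin M) < j
      · rw [CC_lt hM hlt]
        exact hnot j hj
      · rw [CC_other hM hj hlt]
        trivial

lemma BP_implies {M : ℕ} (hM : 0 < M) {x : Fin M → ℕ} {i : Fin M} (hb : BP hM i x) :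
    1 ≤ x ⟨0, hM⟩ ∨ ∃ i' : Fin M, i' ≠ ⟨0, hM⟩ ∧ 2 ≤ x i' := by
  by_cases hz : i = ⟨0, hM⟩
  · left
    have := hb i
    rw [CC_self_z hM hz] at this
    rwa [hz] at this
  · right
    have := hb i
    rw [CC_self_nz hM hz] at this
    exact ⟨i, hz, this⟩

lemma SN_bound {m : ℝ} (hm : 0 ≤ m) {M : ℕ} (hM : 0 < M) (i k : Fin M) :
    SNc m (CC hM i k) ≤ (ENNReal.ofReal m + ind (k = i) * 2) * Qc m (CC hM i k) := by
  by_cases hk : k = i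
  · rw [ind_pos hk, one_mul, hk]
    by_cases hz : i = ⟨0, hM⟩
    · rw [CC_self_z hM hz]
      exact SNc_ge1 hm
    · rw [CC_self_nz hM hz]
      exact SNc_ge2 hm
  · rw [ind_neg hk, zero_mul, add_zero]
    by_cases hlt : i < k
    · rw [CC_lt hM hlt]
      exact SNc_le1 hm
    · rw [CC_other hM hk hlt]
      exact SNc_true hm

lemma coeff_sum {m : ℝ} {M : ℕ} (i : Fin M) :
    ∑ k : Fin M, (ENNReal.ofReal m + ind (k = i) * 2)
      = (M : ℝ≥0∞) * ENNReal.ofReal m + 2 := by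
  rw [Finset.sum_add_distrib, Finset.sum_const, Finset.card_univ, Fintype.card_fin]
  congr 1
  · rw [nsmul_eq_mul]
  · rw [Finset.sum_eq_single i
      (fun b _ hb => by rw [ind_neg hb, zero_mul])
      (fun h => absurd (Finset.mem_univ i) h), ind_pos rfl, one_mul]

end Stmt14Aux

open Stmt14Aux ENNReal

/-- Let `X_1, ..., X_M` be i.i.d. `Poisson(μ)` with `μ = λ/(2M)` (so `M` plays the role of
`2^{αt/3}` and `N = ∑ X_i ~ Po(λ/2)`), and let `B` be the event that `X_1 ≥ 1` or `X_i ≥ 2`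
for some `i ≥ 2`. Then `P(B) ≤ (λ²/8 + λ/2)/M`, and `E[N | B] ≤ λ/2 + 2`, i.e.
`E[N · 1_B] ≤ (λ/2 + 2) P(B)`. -/
theorem stmt14 (lam : ℝ) (hlam : 0 < lam) (M : ℕ) (hM : 0 < M)
    (μ : ℝ) (hμ : μ = lam / (2 * M))
    (pr : (Fin M → ℕ) → ℝ) (hpr : ∀ x, pr x = ∏ i, ppmf μ (x i))
    (B : (Fin M → ℕ) → Prop)
    (hB : ∀ x, B x ↔ 1 ≤ x ⟨0, hM⟩ ∨ ∃ i : Fin M, i ≠ ⟨0, hM⟩ ∧ 2 ≤ x i) :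
    (∑' x : Fin M → ℕ, if B x then pr x else 0) ≤ (lam ^ 2 / 8 + lam / 2) / M ∧
    (∑' x : Fin M → ℕ, if B x then (∑ i, (x i : ℝ)) * pr x else 0) ≤
      (lam / 2 + 2) * ∑' x : Fin M → ℕ, if B x then pr x else 0 := by
  have hMR : (0:ℝ) < M := by exact_mod_cast hM
  have hMne : (M:ℝ) ≠ 0 := ne_of_gt hMR
  have hm : 0 ≤ μ := by rw [hμ]; positivity
  have hprn : ∀ x, 0 ≤ pr x := fun x => by
    rw [hpr]; exact Finset.prod_nonneg fun j _ => ppmf_nonneg hm _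
  have hf1n : ∀ x : Fin M → ℕ, 0 ≤ (if B x then pr x else 0) := by
    intro x
    by_cases h : B x
    · rw [if_pos h]; exact hprn x
    · rw [if_neg h]
  have hf2n : ∀ x : Fin M → ℕ, 0 ≤ (if B x then (∑ i, (x i : ℝ)) * pr x else 0) := by
    intro x
    by_cases h : B x
    · rw [if_pos h]
      exact mul_nonneg (Finset.sum_nonneg fun i _ => Nat.cast_nonneg _) (hprn x)
    · rw [if_neg h]
  have hiff : ∀ x, B x ↔ ∃ i, BP hM i x := by
    intro x
    constructor
    · intro hb
      exact BP_exists hM ((hB x).mp hb)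
    · rintro ⟨i, hi⟩
      exact (hB x).mpr (BP_implies hM hi)
  have hpt : ∀ (x : Fin M → ℕ) (v : ℝ≥0∞),
      ind (B x) * v = ∑ i : Fin M, ind (BP hM i x) * v := by
    intro x v
    by_cases hb : B x
    · obtain ⟨i0, hi0⟩ := (hiff x).mp hb
      rw [ind_pos hb, one_mul, Finset.sum_eq_single i0
        (fun b _ hbne => by rw [ind_neg (fun hb' => hbne (BP_unique hM hb' hi0)), zero_mul])
        (fun hni => absurd (Finset.mem_univ i0) hni), ind_pos hi0, one_mul]
    · rw [ind_neg hb, zero_mul]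
      exact (Finset.sum_eq_zero fun i _ => by
        rw [ind_neg (fun hi => hb ((hiff x).mpr ⟨i, hi⟩)), zero_mul]).symm
  have hlift1 : ∀ x : Fin M → ℕ,
      ENNReal.ofReal (if B x then pr x else 0) = ind (B x) * ∏ j, p μ (x j) := by
    intro x
    by_cases h : B x
    · rw [if_pos h, ind_pos h, one_mul, hpr x,
        ENNReal.ofReal_prod_of_nonneg (fun j _ => ppmf_nonneg hm _)]
      rfl
    · rw [if_neg h, ind_neg h, zero_mul, ENNReal.ofReal_zero]
  have hlift2 : ∀ x : Fin M → ℕ,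
      ENNReal.ofReal (if B x then (∑ i, (x i : ℝ)) * pr x else 0)
        = ind (B x) * ((∑ k, ((x k : ℕ) : ℝ≥0∞)) * ∏ j, p μ (x j)) := by
    intro x
    by_cases h : B x
    · rw [if_pos h, ind_pos h, one_mul,
        ENNReal.ofReal_mul (Finset.sum_nonneg fun i _ => Nat.cast_nonneg _)]
      congr 1
      · rw [ENNReal.ofReal_sum_of_nonneg (fun i _ => Nat.cast_nonneg _)]
        exact Finset.sum_congr rfl fun i _ => ENNReal.ofReal_natCast _
      · rw [hpr x, ENNReal.ofReal_prod_of_nonneg (fun j _ => ppmf_nonneg hm _)]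
        rfl
    · rw [if_neg h, ind_neg h, zero_mul, ENNReal.ofReal_zero]
  have hprodg : ∀ (i : Fin M) (x : Fin M → ℕ),
      ind (BP hM i x) * ∏ j, p μ (x j)
        = ∏ j, (ind (CC hM i j (x j)) * p μ (x j)) := by
    intro i x
    by_cases h : BP hM i x
    · rw [ind_pos h, one_mul]
      exact Finset.prod_congr rfl fun j _ => by rw [ind_pos (h j), one_mul]
    · rw [ind_neg h, zero_mul]
      have hex : ∃ j, ¬ CC hM i j (x j) := by
        by_contra hc; push_neg at hc; exact h hc
      obtain ⟨j0, hj0⟩ := hex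
      exact (Finset.prod_eq_zero (Finset.mem_univ j0) (by rw [ind_neg hj0, zero_mul])).symm
  have hprodgN : ∀ (i k : Fin M) (x : Fin M → ℕ),
      ind (BP hM i x) * (((x k : ℕ) : ℝ≥0∞) * ∏ j, p μ (x j))
        = ∏ j, (ind (CC hM i j (x j)) *
            (if j = k then ((x j : ℕ) : ℝ≥0∞) * p μ (x j) else p μ (x j))) := by
    intro i k x
    by_cases h : BP hM i x
    · rw [ind_pos h, one_mul]
      have hR : (∏ j, (ind (CC hM i j (x j)) *
            (if j = k then ((x j : ℕ) : ℝ≥0∞) * p μ (x j) else p μ (x j))))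
          = (((x k : ℕ) : ℝ≥0∞) * p μ (x k)) * ∏ j ∈ Finset.univ.erase k, p μ (x j) := by
        rw [← Finset.mul_prod_erase Finset.univ _ (Finset.mem_univ k), ind_pos (h k),
          one_mul, if_pos rfl]
        congr 1
        refine Finset.prod_congr rfl fun j hj => ?_
        rw [ind_pos (h j), one_mul, if_neg (Finset.ne_of_mem_erase hj)]
      rw [hR, ← Finset.mul_prod_erase Finset.univ (fun j => p μ (x j)) (Finset.mem_univ k)]
      ring
    · rw [ind_neg h, zero_mul]
      have hex : ∃ j, ¬ CC hM i j (x j) := by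
        by_contra hc; push_neg at hc; exact h hc
      obtain ⟨j0, hj0⟩ := hex
      exact (Finset.prod_eq_zero (Finset.mem_univ j0) (by rw [ind_neg hj0, zero_mul])).symm
  have hE : ∀ (i k : Fin M),
      (∑' x : Fin M → ℕ, ∏ j, (ind (CC hM i j (x j)) *
          (if j = k then ((x j : ℕ) : ℝ≥0∞) * p μ (x j) else p μ (x j))))
        = SNc μ (CC hM i k) * ∏ j ∈ Finset.univ.erase k, Qc μ (CC hM i j) := by
    intro i k
    rw [tsum_pi_prod M (fun j n => ind (CC hM i j n) *
      (if j = k then (n : ℝ≥0∞) * p μ n else p μ n))]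
    rw [← Finset.mul_prod_erase Finset.univ _ (Finset.mem_univ k)]
    congr 1
    · unfold SNc
      exact tsum_congr fun n => by rw [if_pos rfl]
    · refine Finset.prod_congr rfl fun j hj => ?_
      unfold Qc
      exact tsum_congr fun n => by rw [if_neg (Finset.ne_of_mem_erase hj)]
  have hT1 : (∑' x : Fin M → ℕ, ENNReal.ofReal (if B x then pr x else 0))
      = ∑ i : Fin M, ∏ j, Qc μ (CC hM i j) := by
    calc ∑' x : Fin M → ℕ, ENNReal.ofReal (if B x then pr x else 0)
        = ∑' x : Fin M → ℕ, ind (B x) * ∏ j, p μ (x j) := tsum_congr hlift1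
      _ = ∑' x : Fin M → ℕ, ∑ i : Fin M, ind (BP hM i x) * ∏ j, p μ (x j) :=
          tsum_congr fun x => hpt x _
      _ = ∑ i : Fin M, ∑' x : Fin M → ℕ, ind (BP hM i x) * ∏ j, p μ (x j) :=
          Summable.tsum_finsetSum fun i _ => ENNReal.summable
      _ = ∑ i : Fin M, ∑' x : Fin M → ℕ, ∏ j, (ind (CC hM i j (x j)) * p μ (x j)) :=
          Finset.sum_congr rfl fun i _ => tsum_congr fun x => hprodg i x
      _ = ∑ i : Fin M, ∏ j, Qc μ (CC hM i j) := by
          refine Finset.sum_congr rfl fun i _ => ?_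
          rw [tsum_pi_prod M (fun j n => ind (CC hM i j n) * p μ n)]
          rfl
  have hQdiag : ∀ i : Fin M, ∏ j, Qc μ (CC hM i j) ≤ Qc μ (CC hM i i) := by
    intro i
    rw [← Finset.mul_prod_erase Finset.univ _ (Finset.mem_univ i)]
    calc Qc μ (CC hM i i) * ∏ j ∈ Finset.univ.erase i, Qc μ (CC hM i j)
        ≤ Qc μ (CC hM i i) * 1 :=
          mul_le_mul_right (Finset.prod_le_one (fun j _ => zero_le)
            (fun j _ => Qc_le_one hm _)) _
      _ = Qc μ (CC hM i i) := mul_one _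
  have hQd2 : ∀ i : Fin M, Qc μ (CC hM i i)
      ≤ (if i = (⟨0, hM⟩ : Fin M) then ENNReal.ofReal μ else ENNReal.ofReal (μ^2/2)) := by
    intro i
    by_cases hz : i = ⟨0, hM⟩
    · rw [if_pos hz, CC_self_z hM hz]
      exact Qc_ge1_le hm
    · rw [if_neg hz, CC_self_nz hM hz]
      exact Qc_ge2_le hm
  have hsum_diag : (∑ i : Fin M,
      (if i = (⟨0, hM⟩ : Fin M) then ENNReal.ofReal μ else ENNReal.ofReal (μ^2/2)))
      ≤ ENNReal.ofReal ((lam^2/8 + lam/2)/M) := by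
    rw [← Finset.add_sum_erase Finset.univ _ (Finset.mem_univ (⟨0, hM⟩ : Fin M)), if_pos rfl]
    calc ENNReal.ofReal μ + ∑ i ∈ Finset.univ.erase (⟨0, hM⟩ : Fin M),
          (if i = (⟨0, hM⟩ : Fin M) then ENNReal.ofReal μ else ENNReal.ofReal (μ^2/2))
        = ENNReal.ofReal μ + ∑ _i ∈ Finset.univ.erase (⟨0, hM⟩ : Fin M),
            ENNReal.ofReal (μ^2/2) := by
          congr 1
          exact Finset.sum_congr rfl fun i hi => by rw [if_neg (Finset.ne_of_mem_erase hi)]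
      _ = ENNReal.ofReal μ + (Finset.univ.erase (⟨0, hM⟩ : Fin M)).card •
            ENNReal.ofReal (μ^2/2) := by rw [Finset.sum_const]
      _ ≤ ENNReal.ofReal μ + (M : ℝ≥0∞) * ENNReal.ofReal (μ^2/2) := by
          rw [nsmul_eq_mul]
          refine add_le_add_right (mul_le_mul_left ?_ _) _
          have hcard : (Finset.univ.erase (⟨0, hM⟩ : Fin M)).card ≤ M := by
            calc (Finset.univ.erase (⟨0, hM⟩ : Fin M)).card
                ≤ (Finset.univ : Finset (Fin M)).card := Finset.card_erase_le
              _ = M := by rw [Finset.card_univ, Fintype.card_fin]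
          exact_mod_cast Nat.cast_le.mpr hcard
      _ = ENNReal.ofReal (μ + M * (μ^2/2)) := by
          rw [ENNReal.ofReal_add hm (by positivity), ← ENNReal.ofReal_natCast M,
            ← ENNReal.ofReal_mul (Nat.cast_nonneg M)]
      _ = ENNReal.ofReal ((lam^2/8 + lam/2)/M) := by
          congr 1
          rw [hμ]
          field_simp
          ring
  have hbound1 : (∑' x : Fin M → ℕ, ENNReal.ofReal (if B x then pr x else 0))
      ≤ ENNReal.ofReal ((lam^2/8 + lam/2)/M) := by
    rw [hT1]
    exact le_trans (Finset.sum_le_sum fun i _ => le_trans (hQdiag i) (hQd2 i)) hsum_diag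
  have hc1 : (0:ℝ) ≤ (lam^2/8 + lam/2)/M := by
    apply div_nonneg _ (le_of_lt hMR)
    nlinarith [sq_nonneg lam]
  have part1 : (∑' x : Fin M → ℕ, if B x then pr x else 0) ≤ (lam ^ 2 / 8 + lam / 2) / M :=
    final_le _ hf1n hc1 hbound1
  -- part 2
  have hKK : (M : ℝ≥0∞) * ENNReal.ofReal μ + 2 = ENNReal.ofReal (lam/2 + 2) := by
    rw [ENNReal.ofReal_add (by linarith) (by norm_num), ← ENNReal.ofReal_natCast M,
      ← ENNReal.ofReal_mul (Nat.cast_nonneg M)]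
    congr 1
    · congr 1
      rw [hμ]
      field_simp
    · simp
  have hT2 : (∑' x : Fin M → ℕ, ENNReal.ofReal (if B x then (∑ i, (x i : ℝ)) * pr x else 0))
      = ∑ i : Fin M, ∑ k : Fin M,
          SNc μ (CC hM i k) * ∏ j ∈ Finset.univ.erase k, Qc μ (CC hM i j) := by
    calc ∑' x : Fin M → ℕ, ENNReal.ofReal (if B x then (∑ i, (x i : ℝ)) * pr x else 0)
        = ∑' x : Fin M → ℕ, ind (B x) * ((∑ k, ((x k : ℕ) : ℝ≥0∞)) * ∏ j, p μ (x j)) :=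
          tsum_congr hlift2
      _ = ∑' x : Fin M → ℕ, ∑ i : Fin M,
            ind (BP hM i x) * ((∑ k, ((x k : ℕ) : ℝ≥0∞)) * ∏ j, p μ (x j)) :=
          tsum_congr fun x => hpt x _
      _ = ∑' x : Fin M → ℕ, ∑ i : Fin M, ∑ k : Fin M,
            ind (BP hM i x) * (((x k : ℕ) : ℝ≥0∞) * ∏ j, p μ (x j)) := by
          refine tsum_congr fun x => Finset.sum_congr rfl fun i _ => ?_
          rw [Finset.sum_mul, Finset.mul_sum]
      _ = ∑ i : Fin M, ∑' x : Fin M → ℕ, ∑ k : Fin M,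
            ind (BP hM i x) * (((x k : ℕ) : ℝ≥0∞) * ∏ j, p μ (x j)) :=
          Summable.tsum_finsetSum fun i _ => ENNReal.summable
      _ = ∑ i : Fin M, ∑ k : Fin M, ∑' x : Fin M → ℕ,
            ind (BP hM i x) * (((x k : ℕ) : ℝ≥0∞) * ∏ j, p μ (x j)) :=
          Finset.sum_congr rfl fun i _ => Summable.tsum_finsetSum fun k _ => ENNReal.summable
      _ = ∑ i : Fin M, ∑ k : Fin M, ∑' x : Fin M → ℕ,
            ∏ j, (ind (CC hM i j (x j)) *
              (if j = k then ((x j : ℕ) : ℝ≥0∞) * p μ (x j) else p μ (x j))) :=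
          Finset.sum_congr rfl fun i _ => Finset.sum_congr rfl fun k _ =>
            tsum_congr fun x => hprodgN i k x
      _ = ∑ i : Fin M, ∑ k : Fin M,
            SNc μ (CC hM i k) * ∏ j ∈ Finset.univ.erase k, Qc μ (CC hM i j) :=
          Finset.sum_congr rfl fun i _ => Finset.sum_congr rfl fun k _ => hE i k
  have hbound2 : (∑ i : Fin M, ∑ k : Fin M,
        SNc μ (CC hM i k) * ∏ j ∈ Finset.univ.erase k, Qc μ (CC hM i j))
      ≤ ENNReal.ofReal (lam/2 + 2) * ∑ i : Fin M, ∏ j, Qc μ (CC hM i j) := by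
    rw [Finset.mul_sum]
    refine Finset.sum_le_sum fun i _ => ?_
    calc ∑ k : Fin M, SNc μ (CC hM i k) * ∏ j ∈ Finset.univ.erase k, Qc μ (CC hM i j)
        ≤ ∑ k : Fin M, ((ENNReal.ofReal μ + ind (k = i) * 2) * Qc μ (CC hM i k)) *
            ∏ j ∈ Finset.univ.erase k, Qc μ (CC hM i j) :=
          Finset.sum_le_sum fun k _ => mul_le_mul_left (SN_bound hm hM i k) _
      _ = ∑ k : Fin M, (ENNReal.ofReal μ + ind (k = i) * 2) * ∏ j, Qc μ (CC hM i j) :=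
          Finset.sum_congr rfl fun k _ => by
            rw [mul_assoc,
              Finset.mul_prod_erase Finset.univ (fun j => Qc μ (CC hM i j)) (Finset.mem_univ k)]
      _ = (∑ k : Fin M, (ENNReal.ofReal μ + ind (k = i) * 2)) * ∏ j, Qc μ (CC hM i j) :=
          (Finset.sum_mul _ _ _).symm
      _ = ((M : ℝ≥0∞) * ENNReal.ofReal μ + 2) * ∏ j, Qc μ (CC hM i j) := by
          rw [coeff_sum]
      _ = ENNReal.ofReal (lam/2 + 2) * ∏ j, Qc μ (CC hM i j) := by rw [hKK]
  have hT1ne : (∑' x : Fin M → ℕ, ENNReal.ofReal (if B x then pr x else 0)) ≠ ⊤ :=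
    ne_top_of_le_ne_top ENNReal.ofReal_ne_top hbound1
  have part2 : (∑' x : Fin M → ℕ, if B x then (∑ i, (x i : ℝ)) * pr x else 0) ≤
      (lam / 2 + 2) * ∑' x : Fin M → ℕ, if B x then pr x else 0 := by
    refine final_le _ hf2n
      (mul_nonneg (by linarith) (tsum_nonneg hf1n)) ?_
    rw [ENNReal.ofReal_mul (by linarith), oftsum _ hf1n hT1ne, hT2, hT1]
    exact hbound2
  exact ⟨part1, part2⟩
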